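/- Let ℒ = {l₁, l₂, …, l_s} be a set of s nonnegative integers. If 𝒜 is an ℒ-intersecting family of pairwise distinct subsets of [n], then |𝒜| ≤ C(n, s) + C(n, s−1) + … + C(n, 0). -/

import Mathlib

/-!
Polynomial method. For `a ∈ 𝒜` let `f_a(x) = ∏_{l ∈ ℒ, l < |a|} (|x ∩ a| - l)`, a function of
`x ⊆ [n]`. Then `f_a(a) ≠ 0`, while `f_b(a) = 0` whenever `a ≠ b` and `|a| ≤ |b|`, because
`|a ∩ b| ∈ ℒ` and `|a ∩ b| < |b|`. Ordering `𝒜` by size thus makes the evaluation matrix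
triangular, so the `f_a` are linearly independent. Since `|x ∩ a| = ∑_{i ∈ a} x_i` is linear in
the indicator coordinates of `x`, each `f_a` is a multilinear polynomial of degree at most `s`,
and these span a space of dimension at most `∑_{j ≤ s} C(n, j)`.
-/

open Finset Submodule

theorem linearIndependent_of_triangular {ι β γ K : Type*} [Ring K] [NoZeroDivisors K]
    [LinearOrder γ] (f : ι → β → K) (pt : ι → β) (w : ι → γ)
    (hdiag : ∀ i, f i (pt i) ≠ 0) (hoff : ∀ i j, i ≠ j → w i ≤ w j → f j (pt i) = 0) :
    LinearIndependent K f := by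
  rw [linearIndependent_iff]
  intro l hl
  by_contra hne
  -- evaluate the vanishing combination at the point of a lightest index in its support
  obtain ⟨i, hi, hmin⟩ := l.support.exists_min_image w (Finsupp.support_nonempty_iff.2 hne)
  have hval := congrFun hl (pt i)
  rw [Finsupp.linearCombination_apply, Finsupp.sum, Finset.sum_apply,
    sum_eq_single i (fun j hj hji => by simp [hoff i j (Ne.symm hji) (hmin j hj)])
      (fun h => absurd hi h)] at hval
  exact mul_ne_zero (Finsupp.mem_support_iff.1 hi) (hdiag i) hval

lemma Finset.card_inter_lt_of_ne_of_card_le {α : Type*} [DecidableEq α] {s t : Finset α}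
    (hst : s ≠ t) (hcard : #s ≤ #t) : #(s ∩ t) < #t := by
  refine (card_le_card inter_subset_right).lt_of_ne fun h => hst ?_
  have hts : t ⊆ s := eq_of_subset_of_card_le inter_subset_right h.ge ▸ inter_subset_left
  exact (eq_of_subset_of_card_le hts hcard).symm

section LowDegree

variable (K : Type*) {α : Type*} [DecidableEq α]

/-- The monomial `∏_{i ∈ B} x_i`, evaluated at the indicator vector of `x`. -/
def subsetIndicator [Zero K] [One K] (B x : Finset α) : K := if B ⊆ x then 1 else 0

variable (α) in
/-- Multilinear polynomials of degree at most `d`, as functions on the cube `Finset α`. -/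
def lowDegree [CommRing K] (d : ℕ) : Submodule K (Finset α → K) :=
  span K (Set.range fun B : {B : Finset α // #B ≤ d} => subsetIndicator K B.1)

variable {K} [CommRing K]

lemma subsetIndicator_mem_lowDegree {B : Finset α} {d : ℕ} (hB : #B ≤ d) :
    subsetIndicator K B ∈ lowDegree K α d :=
  subset_span ⟨⟨B, hB⟩, rfl⟩

lemma lowDegree_mono {d d' : ℕ} (h : d ≤ d') : lowDegree K α d ≤ lowDegree K α d' :=
  span_le.2 <| Set.range_subset_iff.2 fun B => subsetIndicator_mem_lowDegree (B.2.trans h)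

-- `|x ∩ a| = ∑_{i ∈ a} x_i` and `x_i x_B = x_{insert i B}`
lemma card_inter_mul_subsetIndicator (a B x : Finset α) :
    (#(x ∩ a) : K) * subsetIndicator K B x = ∑ i ∈ a, subsetIndicator K (insert i B) x := by
  by_cases hBx : B ⊆ x
  · simp [subsetIndicator, hBx, insert_subset_iff, inter_comm]
  · have : ∀ i, ¬ insert i B ⊆ x := fun i h => hBx ((subset_insert i B).trans h)
    simp [subsetIndicator, hBx, this]

lemma card_inter_sub_mul_mem_lowDegree (a : Finset α) (c : K) {d : ℕ} {h : Finset α → K}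
    (hh : h ∈ lowDegree K α d) :
    (fun x => ((#(x ∩ a) : K) - c) * h x) ∈ lowDegree K α (d + 1) := by
  let g : Finset α → K := fun x => (#(x ∩ a) : K) - c
  suffices lowDegree K α d ≤ (lowDegree K α (d + 1)).comap (LinearMap.mulLeft K g) from this hh
  refine span_le.2 <| Set.range_subset_iff.2 fun ⟨B, hB⟩ => ?_
  have hexpand : g * subsetIndicator K B
      = ∑ i ∈ a, subsetIndicator K (insert i B) - c • subsetIndicator K B := by
    funext x
    simp [g, sub_mul, card_inter_mul_subsetIndicator]
  show g * subsetIndicator K B ∈ lowDegree K α (d + 1)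
  rw [hexpand]
  refine sub_mem (sum_mem fun i _ => subsetIndicator_mem_lowDegree ?_)
    (smul_mem _ _ (subsetIndicator_mem_lowDegree (by omega)))
  exact (card_insert_le i B).trans (by omega)

lemma prod_card_inter_sub_mem_lowDegree (a : Finset α) (L : Finset ℕ) :
    (fun x => ∏ l ∈ L, ((#(x ∩ a) : K) - l)) ∈ lowDegree K α #L := by
  induction L using Finset.induction with
  | empty =>
    simp only [prod_empty, card_empty]
    convert subsetIndicator_mem_lowDegree (K := K) (card_empty (α := α)).le using 1
    funext x
    simp [subsetIndicator]
  | @insert l L hl ih =>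
    simp only [prod_insert hl, card_insert_of_notMem hl]
    exact card_inter_sub_mul_mem_lowDegree a (l : K) ih

instance [Fintype α] (d : ℕ) : Module.Finite K (lowDegree K α d) :=
  Module.Finite.span_of_finite K (Set.finite_range _)

variable (K) in
lemma finrank_lowDegree_le [Nontrivial K] [Fintype α] (d : ℕ) :
    Module.finrank K (lowDegree K α d) ≤ ∑ j ∈ range (d + 1), (Fintype.card α).choose j := by
  refine (finrank_range_le_card _).trans_eq ?_
  rw [Fintype.card_subtype, card_eq_sum_card_fiberwise (f := card) (t := range (d + 1))
    (fun B hB => by simpa [Nat.lt_succ_iff] using hB)]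
  refine sum_congr rfl fun j hj => ?_
  rw [← card_univ, ← card_powersetCard]
  congr 1
  ext B
  simp only [mem_filter, mem_univ, true_and, mem_powersetCard, subset_univ]
  grind

end LowDegree

section IntersectionPoly

variable (K : Type*) {α : Type*} [DecidableEq α] [CommRing K]

def intersectionPoly (L : Finset ℕ) (a x : Finset α) : K :=
  ∏ l ∈ L with l < #a, ((#(x ∩ a) : K) - l)

variable {K}

lemma intersectionPoly_mem_lowDegree (L : Finset ℕ) (a : Finset α) :
    intersectionPoly K L a ∈ lowDegree K α #L :=
  lowDegree_mono (card_filter_le _ _) (prod_card_inter_sub_mem_lowDegree a _)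

lemma intersectionPoly_self_ne_zero [IsDomain K] [CharZero K] (L : Finset ℕ) (a : Finset α) :
    intersectionPoly K L a a ≠ 0 := by
  rw [intersectionPoly, inter_self]
  refine prod_ne_zero_iff.2 fun l hl => sub_ne_zero.2 ?_
  exact_mod_cast (mem_filter.1 hl).2.ne'

lemma intersectionPoly_eq_zero {L : Finset ℕ} {a x : Finset α} (hL : #(x ∩ a) ∈ L)
    (hlt : #(x ∩ a) < #a) : intersectionPoly K L a x = 0 :=
  prod_eq_zero (mem_filter.2 ⟨hL, hlt⟩) (sub_self _)

end IntersectionPoly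

/-- **Theorem 1.3 (Frankl–Wilson).** Let `ℒ` be a set of `s` nonnegative integers.
If `𝒜` is an `ℒ`-intersecting family of (pairwise distinct) subsets of `[n]`, then
`|𝒜| ≤ C(n, s) + C(n, s-1) + ⋯ + C(n, 0)`. -/
theorem stmt_15 (n s : ℕ) (L : Finset ℕ) (hL : L.card = s)
    (A : Finset (Finset (Fin n)))
    (hAL : ∀ a ∈ A, ∀ b ∈ A, a ≠ b → (a ∩ b).card ∈ L) :
    A.card ≤ ∑ j ∈ Finset.range (s + 1), n.choose j := by
  have hli : LinearIndependent ℝ fun a : A => intersectionPoly ℝ L a.1 := by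
    refine linearIndependent_of_triangular _ Subtype.val (fun a => #a.1) (fun a => ?_) ?_
    · exact intersectionPoly_self_ne_zero L a.1
    · intro a b hab hcard
      have hab' : a.1 ≠ b.1 := Subtype.coe_ne_coe.2 hab
      exact intersectionPoly_eq_zero (hAL a a.2 b b.2 hab')
        (card_inter_lt_of_ne_of_card_le hab' hcard)
  have hspan : span ℝ (Set.range fun a : A => intersectionPoly ℝ L a.1) ≤ lowDegree ℝ (Fin n) s :=
    span_le.2 <| Set.range_subset_iff.2 fun a => hL ▸ intersectionPoly_mem_lowDegree L a.1
  calc #A = Module.finrank ℝ (span ℝ (Set.range fun a : A => intersectionPoly ℝ L a.1)) := by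
        rw [finrank_span_eq_card hli, Fintype.card_coe]
    _ ≤ Module.finrank ℝ (lowDegree ℝ (Fin n) s) := Submodule.finrank_mono hspan
    _ ≤ ∑ j ∈ range (s + 1), n.choose j := by
        simpa only [Fintype.card_fin] using finrank_lowDegree_le ℝ (α := Fin n) s
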